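/- Fix t ∈ [T], x_{1:t} ∈ X^t, and y_{1:t-1} ∈ Y^{t-1}. For each y ∈ Y let g(y) = sup_x S_T(F, x | x_{1:t}, (y_{1:t-1}, y)), the supremum over context trees x of depth T−t, and assume Σ_{y ∈ Y} g(y) > 0. Then the contextual NML prediction p̂* ∈ Δ(Y) given by p̂*(y) = g(y) / Σ_{y' ∈ Y} g(y') attains the minimum over p ∈ Δ(Y) of max_{y ∈ Y} [ −log p(y) + log g(y) ], and this minimum value equals log Σ_{y ∈ Y} g(y); since G(F, x_{1:t}, (y_{1:t-1}, y)) = log g(y), the cNML prediction p̂* is the minimax optimal prediction at round t. -/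

import Mathlib

open scoped BigOperators

/-- The probability simplex on a finite label set `Y`. -/
abbrev Simplex (Y : Type*) [Fintype Y] :=
  {p : Y → ℝ // (∀ y, 0 ≤ p y) ∧ ∑ y, p y = 1}

/-- A sequential expert: given contexts `x₁,…,x_t` (a list of length `t`) and past labels
`y₁,…,y_{t-1}` (a list of length `t-1`), it predicts a distribution over labels. -/
abbrev Expert (X Y : Type*) [Fintype Y] := List X → List Y → Simplex Y

/-- `-log x` as an extended real, with `-log 0 = ⊤` (and junk value `⊤` for `x < 0`). -/
noncomputable def negLog (x : ℝ) : EReal :=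
  if x ≤ 0 then ⊤ else ((-Real.log x : ℝ) : EReal)

/-- `log x` as an extended real, with `log 0 = ⊥` (and junk value `⊥` for `x < 0`). -/
noncomputable def elog (x : ℝ) : EReal :=
  if x ≤ 0 then ⊥ else ((Real.log x : ℝ) : EReal)

/-- The logarithmic loss `ℓ(p, y) = -log p(y) ∈ [0, ∞]`. -/
noncomputable def logloss {Y : Type*} [Fintype Y] (p : Simplex Y) (y : Y) : EReal :=
  negLog (p.1 y)

/-- Likelihood of expert `f` on a context sequence `xs` and a label sequence `ys`
of the same length: `L(f; y_{1:d} | x_{1:d}) = ∏_{t=1}^d f(x_{1:t}, y_{1:t-1})(y_t)`. -/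
noncomputable def likelihood {X Y : Type*} [Fintype Y] [Inhabited Y]
    (f : Expert X Y) (xs : List X) (ys : List Y) : ℝ :=
  ∏ t ∈ Finset.range ys.length, (f (xs.take (t + 1)) (ys.take t)).1 (ys.getD t default)

/-- Cumulative log loss of expert `f` on `xs`, `ys`:
`Σ_{t=1}^d ℓ(f(x_{1:t}, y_{1:t-1}), y_t)`. -/
noncomputable def cumLoss {X Y : Type*} [Fintype Y] [Inhabited Y]
    (f : Expert X Y) (xs : List X) (ys : List Y) : EReal :=
  ∑ t ∈ Finset.range ys.length, logloss (f (xs.take (t + 1)) (ys.take t)) (ys.getD t default)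

/-- A context tree of depth `T` is modelled as a map `χ : List Y → X` (only its values on
lists of length `< T` matter): `x_t(y) = χ (y_{1:t-1})`.  `treePath χ ys` is the context
sequence `x(y) = (x_1, x_2(y_1), …)` obtained by tracing the tree along the path `ys`. -/
def treePath {X Y : Type*} (χ : List Y → X) (ys : List Y) : List X :=
  (List.range ys.length).map fun t => χ (ys.take t)

/-- The contextual Shtarkov sum of `F` on a context tree `χ` of depth `r`, with prefix
`xs ∈ X^t`, `ys ∈ Y^t`:
`S_T(F, χ | x_{1:t}, y_{1:t}) = Σ_{y ∈ Y^r} sup_{f ∈ F} L(f; (y_{1:t}, y) | (x_{1:t}, χ(y)))`. -/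
noncomputable def shtarkovPrefix {X Y : Type*} [Fintype Y] [Inhabited Y]
    (F : Set (Expert X Y)) (r : ℕ) (χ : List Y → X) (xs : List X) (ys : List Y) : ℝ :=
  ∑ y : Fin r → Y, ⨆ f : F,
    likelihood (f : Expert X Y) (xs ++ treePath χ (List.ofFn y)) (ys ++ List.ofFn y)

/-- The contextual Shtarkov sum `S_T(F | χ) = Σ_{y ∈ Y^T} sup_{f ∈ F} L(f; y | χ(y))`. -/
noncomputable def shtarkov {X Y : Type*} [Fintype Y] [Inhabited Y]
    (F : Set (Expert X Y)) (T : ℕ) (χ : List Y → X) : ℝ :=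
  shtarkovPrefix F T χ [] []

/-- The extensive-form game value with `r` rounds to go, given past contexts `xs`, past
labels `ys`, and accumulated learner loss `acc`:
`sup_{x} inf_{p̂} sup_{y} ⋯ [ acc + Σ ℓ(p̂_s, y_s) − inf_{f ∈ F} Σ_{s=1}^T ℓ(f, y_s) ]`. -/
noncomputable def valToGo {X Y : Type*} [Fintype Y] [Inhabited Y]
    (F : Set (Expert X Y)) : ℕ → List X → List Y → EReal → EReal
  | 0, xs, ys, acc => acc - ⨅ f : F, cumLoss (f : Expert X Y) xs ys
  | r + 1, xs, ys, acc =>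
      ⨆ x : X, ⨅ p : Simplex Y, ⨆ y : Y,
        valToGo F r (xs ++ [x]) (ys ++ [y]) (acc + logloss p y)

/-- The minimax regret
`R_T(F) = sup_{x_1} inf_{p̂_1} sup_{y_1} ⋯ sup_{x_T} inf_{p̂_T} sup_{y_T} R_T(F; p̂, x, y)`. -/
noncomputable def minimaxRegret {X Y : Type*} [Fintype Y] [Inhabited Y]
    (F : Set (Expert X Y)) (T : ℕ) : EReal :=
  valToGo F T [] [] 0

/-- Nested conditional expectation over a probabilistic tree `π`, for `r` remaining rounds:
`E_{y_1 ∼ π([])} E_{y_2 ∼ π(y_{1:1})} ⋯ [g(y_{1:r})]`. -/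
noncomputable def expTree {Y : Type*} [Fintype Y] (π : List Y → Simplex Y)
    (g : List Y → EReal) : ℕ → List Y → EReal
  | 0, pre => g pre
  | r + 1, pre => ∑ y : Y, ((π pre).1 y : EReal) * expTree π g r (pre ++ [y])

/-- The dual (max-min) value-to-go `W(F, x_{1:t}, y_{1:t})`: the supremum over context trees
`χ` and probabilistic trees `π` of depth `r = T - t` of
`E_{y∼π}[ Σ_{s=t+1}^T ℓ(π_s(y), y_s) − inf_{f ∈ F} Σ_{s=1}^T ℓ(f, y_s) ]`. -/
noncomputable def dualValToGo {X Y : Type*} [Fintype Y] [Inhabited Y]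
    (F : Set (Expert X Y)) (r : ℕ) (xs : List X) (ys : List Y) : EReal :=
  ⨆ χ : List Y → X, ⨆ π : List Y → Simplex Y,
    expTree π (fun suf =>
      (∑ s ∈ Finset.range r, logloss (π (suf.take s)) (suf.getD s default)) -
        ⨅ f : F, cumLoss (f : Expert X Y) (xs ++ treePath χ suf) (ys ++ suf)) r []

/-- The dual (max-min) value `V_T(F)`. -/
noncomputable def dualValue {X Y : Type*} [Fintype Y] [Inhabited Y]
    (F : Set (Expert X Y)) (T : ℕ) : EReal :=
  dualValToGo F T [] []

/-!
By backward induction, the value-to-go with `r` rounds left is `acc + log sup_χ S(F, χ | xs, ys)`.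
At a leaf this is because the cumulative log loss of an expert is `-log` of its likelihood.  A
round of the game contributes exactly the one-round identity: for nonnegative weights `g`,

  `min_p max_y [-log p(y) + log g(y)] = log Σ_y g(y)`,

where the minimum is attained at `g / Σ g`, and `≥` holds because comparing `Σ g` with
`Σ_y p(y) Σ g` over the support of `g` gives a `y` with `g(y) > 0` and `g(y) ≥ p(y) Σ g`.
The adversary's supremum over the next context then turns the sum over `y` of subtree suprema
into the supremum over trees one level deeper, a tree being its root context together with one
subtree per label.  At round `t` this makes `G(F, x_{1:t}, (y_{1:t-1}, y)) = log g(y)`, so the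
claims are the one-round identity for `g`.
-/

open Finset

section ExtendedLog

lemma elog_eq_log_ofReal (x : ℝ) : elog x = ENNReal.log (ENNReal.ofReal x) :=
  (ENNReal.log_ofReal x).symm

lemma negLog_eq_neg_elog (x : ℝ) : negLog x = -elog x := by
  unfold negLog elog
  split_ifs <;> simp

lemma elog_of_nonpos {x : ℝ} (hx : x ≤ 0) : elog x = ⊥ := if_pos hx

lemma negLog_of_nonpos {x : ℝ} (hx : x ≤ 0) : negLog x = ⊤ := if_pos hx

lemma elog_ne_top (x : ℝ) : elog x ≠ ⊤ := by
  rw [elog_eq_log_ofReal, Ne, ENNReal.log_eq_top_iff]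
  exact ENNReal.ofReal_ne_top

lemma negLog_ne_bot (x : ℝ) : negLog x ≠ ⊥ := by
  simpa [negLog_eq_neg_elog] using elog_ne_top x

lemma elog_monotone : Monotone elog := fun a b hab => by
  simpa only [elog_eq_log_ofReal] using ENNReal.log_monotone (ENNReal.ofReal_le_ofReal hab)

lemma continuous_elog : Continuous elog := by
  rw [show elog = ENNReal.log ∘ ENNReal.ofReal from funext elog_eq_log_ofReal]
  exact ENNReal.continuous_log.comp ENNReal.continuous_ofReal

lemma negLog_mul {a : ℝ} (ha : 0 ≤ a) (b : ℝ) :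
    negLog (a * b) = negLog a + negLog b := by
  have helog : elog (a * b) = elog a + elog b := by
    simp only [elog_eq_log_ofReal, ENNReal.ofReal_mul ha, ENNReal.log_mul_add]
  rw [negLog_eq_neg_elog, negLog_eq_neg_elog, negLog_eq_neg_elog, helog,
    EReal.neg_add (.inr (elog_ne_top b)) (.inl (elog_ne_top a)), sub_eq_add_neg]

lemma negLog_prod {ι : Type*} (s : Finset ι) (f : ι → ℝ) (hf : ∀ i ∈ s, 0 ≤ f i) :
    negLog (∏ i ∈ s, f i) = ∑ i ∈ s, negLog (f i) := by
  induction s using Finset.cons_induction with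
  | empty => simp [negLog_eq_neg_elog, elog_eq_log_ofReal]
  | cons a s ha ih =>
    rw [prod_cons, sum_cons, negLog_mul (hf a (mem_cons_self a s)),
      ih fun i hi => hf i (mem_cons_of_mem hi)]

lemma negLog_add_elog {a : ℝ} (ha : 0 < a) (b : ℝ) : negLog a + elog b = elog (b / a) := by
  rw [negLog_eq_neg_elog, elog_eq_log_ofReal, elog_eq_log_ofReal, elog_eq_log_ofReal,
    ENNReal.ofReal_div_of_pos ha, div_eq_mul_inv, ENNReal.log_mul_add, ENNReal.log_inv, add_comm]

lemma elog_iSup {ι : Sort*} {L : ι → ℝ} (hL : BddAbove (Set.range L)) :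
    elog (⨆ i, L i) = ⨆ i, elog (L i) := by
  cases isEmpty_or_nonempty ι
  · simp [elog_of_nonpos]
  · exact elog_monotone.map_ciSup_of_continuousAt continuous_elog.continuousAt hL

lemma EReal.add_iSup_of_ne_bot {ι : Sort*} {a : EReal} (ha : a ≠ ⊥) (f : ι → EReal) :
    a + ⨆ i, f i = ⨆ i, a + f i := by
  by_cases hbot : a = ⊤ ∧ ⨆ i, f i = ⊥
  · simp [iSup_eq_bot.1 hbot.2]
  have hcont : ContinuousAt (fun x => a + x) (⨆ i, f i) :=
    (EReal.continuousAt_add (not_and_or.1 hbot) (.inl ha)).comp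
      (continuous_const.prodMk continuous_id).continuousAt
  exact Monotone.map_iSup_of_continuousAt hcont (fun _ _ h => add_le_add_right h a)
    (EReal.add_bot a)

end ExtendedLog

section OneRound

variable {Y : Type*} [Fintype Y]

lemma logloss_ne_bot (p : Simplex Y) (y : Y) : logloss p y ≠ ⊥ :=
  negLog_ne_bot _

lemma exists_pos_and_sum_mul_le {g : Y → ℝ} (hg : ∀ y, 0 ≤ g y) (hS : 0 < ∑ y, g y)
    (p : Simplex Y) : ∃ y, 0 < g y ∧ (∑ y', g y') * p.1 y ≤ g y := by
  classical
  set s := univ.filter fun y => 0 < g y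
  have hs : ∑ y ∈ s, g y = ∑ y, g y := sum_filter_of_ne fun y _ hy => (hg y).lt_of_ne' hy
  have hsum : ∑ y ∈ s, (∑ y', g y') * p.1 y ≤ ∑ y ∈ s, g y :=
    calc ∑ y ∈ s, (∑ y', g y') * p.1 y = (∑ y', g y') * ∑ y ∈ s, p.1 y := (mul_sum _ _ _).symm
      _ ≤ (∑ y', g y') * ∑ y, p.1 y := by
        gcongr
        · exact fun y _ _ => p.2.1 y
        · exact subset_univ s
      _ = ∑ y ∈ s, g y := by rw [p.2.2, mul_one, hs]
  obtain ⟨y, hys, hy⟩ := exists_le_of_sum_le (nonempty_of_sum_ne_zero (hs ▸ hS.ne')) hsum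
  exact ⟨y, (mem_filter.1 hys).2, hy⟩

lemma elog_sum_le_iSup_logloss_add_elog {g : Y → ℝ} (hg : ∀ y, 0 ≤ g y) (p : Simplex Y) :
    elog (∑ y, g y) ≤ ⨆ y, (logloss p y + elog (g y)) := by
  rcases le_or_gt (∑ y, g y) 0 with hS | hS
  · rw [elog_of_nonpos hS]
    exact bot_le
  obtain ⟨y, hgy, hy⟩ := exists_pos_and_sum_mul_le hg hS p
  refine le_trans ?_ (le_iSup (fun y => logloss p y + elog (g y)) y)
  rcases (p.2.1 y).eq_or_lt with hpy | hpy
  · rw [logloss, ← hpy, negLog_of_nonpos le_rfl, EReal.top_add_of_ne_bot]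
    · exact le_top
    · rw [elog, if_neg hgy.not_ge]
      exact EReal.coe_ne_bot _
  · rw [logloss, negLog_add_elog hpy]
    exact elog_monotone ((le_div_iff₀ hpy).2 hy)

lemma iSup_logloss_add_elog_of_eq_div {g : Y → ℝ} (hS : 0 < ∑ y, g y) {p : Simplex Y}
    (hp : ∀ y, p.1 y = g y / ∑ y', g y') :
    ⨆ y, (logloss p y + elog (g y)) = elog (∑ y, g y) := by
  refine le_antisymm (iSup_le fun y => ?_) ?_
  · rcases le_or_gt (g y) 0 with hgy | hgy
    · rw [elog_of_nonpos hgy, EReal.add_bot]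
      exact bot_le
    · rw [logloss, hp, negLog_add_elog (div_pos hgy hS), div_div_cancel₀ hgy.ne']
  · refine elog_sum_le_iSup_logloss_add_elog (fun y => ?_) p
    have := p.2.1 y
    rwa [hp, div_nonneg_iff, or_iff_left (fun h => h.2.not_gt hS), and_iff_left hS.le] at this

lemma isLeast_iSup_logloss_add_elog [Nonempty Y] {g : Y → ℝ} (hg : ∀ y, 0 ≤ g y) :
    IsLeast (Set.range fun p : Simplex Y => ⨆ y, (logloss p y + elog (g y)))
      (elog (∑ y, g y)) := by
  refine ⟨?_, Set.forall_mem_range.2 (elog_sum_le_iSup_logloss_add_elog hg)⟩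
  rcases le_or_gt (∑ y, g y) 0 with hS | hS
  · classical
    obtain ⟨y₀⟩ := ‹Nonempty Y›
    refine ⟨⟨Pi.single y₀ 1, fun y => by by_cases h : y = y₀ <;> simp [h], by simp⟩, ?_⟩
    rw [elog_of_nonpos hS, iSup_eq_bot]
    intro y
    rw [elog_of_nonpos ((single_le_sum (fun y _ => hg y) (mem_univ y)).trans hS), EReal.add_bot]
  · refine ⟨⟨fun y => g y / ∑ y', g y', fun y => div_nonneg (hg y) hS.le, ?_⟩,
      iSup_logloss_add_elog_of_eq_div hS fun y => rfl⟩
    rw [← sum_div, div_self hS.ne']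

end OneRound

lemma Finset.sum_ciSup_le {ι κ : Type*} [Nonempty κ] (s : Finset ι) {h : ι → κ → ℝ} {a : ℝ}
    (H : ∀ c : ι → κ, ∑ i ∈ s, h i (c i) ≤ a) : ∑ i ∈ s, ⨆ k, h i k ≤ a := by
  classical
  induction s using Finset.induction_on generalizing a with
  | empty => simpa using H fun _ => Classical.arbitrary κ
  | insert i s hi ih =>
    rw [sum_insert hi, ← le_sub_iff_add_le]
    refine ciSup_le fun k => le_sub_comm.1 (ih fun c => ?_)
    have hc := H (Function.update c i k)
    rw [sum_insert hi, Function.update_self, sum_congr rfl fun j hj =>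
      by rw [Function.update_of_ne (ne_of_mem_of_not_mem hj hi)]] at hc
    linarith

lemma treePath_cons {X Y : Type*} (χ : List Y → X) (y : Y) (l : List Y) :
    treePath χ (y :: l) = χ [] :: treePath (fun m => χ (y :: m)) l := by
  simp only [treePath, List.length_cons, List.range_succ_eq_map, List.map_cons, List.take_zero,
    List.map_map]
  congr 1

section Shtarkov

variable {X Y : Type*} [Fintype Y] [Inhabited Y]

lemma likelihood_nonneg (f : Expert X Y) (xs : List X) (ys : List Y) :
    0 ≤ likelihood f xs ys :=
  prod_nonneg fun t _ => (f (xs.take (t + 1)) (ys.take t)).2.1 _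

lemma likelihood_le_one (f : Expert X Y) (xs : List X) (ys : List Y) :
    likelihood f xs ys ≤ 1 := by
  refine prod_le_one (fun t _ => (f (xs.take (t + 1)) (ys.take t)).2.1 _) fun t _ => ?_
  set p := f (xs.take (t + 1)) (ys.take t)
  calc p.1 (ys.getD t default) ≤ ∑ y, p.1 y := single_le_sum (fun y _ => p.2.1 y) (mem_univ _)
    _ = 1 := p.2.2

lemma cumLoss_eq_negLog_likelihood (f : Expert X Y) (xs : List X) (ys : List Y) :
    cumLoss f xs ys = negLog (likelihood f xs ys) :=
  (negLog_prod _ _ fun t _ => (f (xs.take (t + 1)) (ys.take t)).2.1 _).symm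

lemma shtarkovPrefix_zero (F : Set (Expert X Y)) (χ : List Y → X) (xs : List X) (ys : List Y) :
    shtarkovPrefix F 0 χ xs ys = ⨆ f : F, likelihood (f : Expert X Y) xs ys := by
  simp [shtarkovPrefix, treePath]

lemma shtarkovPrefix_succ (F : Set (Expert X Y)) (r : ℕ) (χ : List Y → X) (xs : List X)
    (ys : List Y) :
    shtarkovPrefix F (r + 1) χ xs ys =
      ∑ y : Y, shtarkovPrefix F r (fun l => χ (y :: l)) (xs ++ [χ []]) (ys ++ [y]) := by
  rw [shtarkovPrefix, ← (Fin.consEquiv fun _ : Fin (r + 1) => Y).sum_comp, Fintype.sum_prod_type]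
  refine sum_congr rfl fun y _ => sum_congr rfl fun w _ => ?_
  simp only [Fin.consEquiv_apply, List.ofFn_succ, Fin.cons_zero, Fin.cons_succ, treePath_cons,
    List.append_assoc, List.singleton_append]

lemma shtarkovPrefix_nonneg (F : Set (Expert X Y)) (r : ℕ) (χ : List Y → X) (xs : List X)
    (ys : List Y) : 0 ≤ shtarkovPrefix F r χ xs ys :=
  sum_nonneg fun _ _ => Real.iSup_nonneg fun _ => likelihood_nonneg _ _ _

lemma shtarkovPrefix_le_card_pow (F : Set (Expert X Y)) (r : ℕ) (χ : List Y → X) (xs : List X)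
    (ys : List Y) : shtarkovPrefix F r χ xs ys ≤ (Fintype.card Y : ℝ) ^ r :=
  calc shtarkovPrefix F r χ xs ys ≤ ∑ _y : Fin r → Y, (1 : ℝ) :=
        sum_le_sum fun _ _ => Real.iSup_le (fun _ => likelihood_le_one _ _ _) zero_le_one
    _ = (Fintype.card Y : ℝ) ^ r := by simp

noncomputable def supShtarkov (F : Set (Expert X Y)) (r : ℕ) (xs : List X) (ys : List Y) : ℝ :=
  ⨆ χ : List Y → X, shtarkovPrefix F r χ xs ys

variable {F : Set (Expert X Y)}

lemma le_supShtarkov (r : ℕ) (χ : List Y → X) (xs : List X) (ys : List Y) :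
    shtarkovPrefix F r χ xs ys ≤ supShtarkov F r xs ys :=
  le_ciSup ⟨_, Set.forall_mem_range.2 fun χ => shtarkovPrefix_le_card_pow F r χ xs ys⟩ χ

lemma supShtarkov_nonneg (F : Set (Expert X Y)) (r : ℕ) (xs : List X) (ys : List Y) :
    0 ≤ supShtarkov F r xs ys :=
  Real.iSup_nonneg fun χ => shtarkovPrefix_nonneg F r χ xs ys

lemma supShtarkov_zero [Nonempty X] (F : Set (Expert X Y)) (xs : List X) (ys : List Y) :
    supShtarkov F 0 xs ys = ⨆ f : F, likelihood (f : Expert X Y) xs ys := by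
  simp only [supShtarkov, shtarkovPrefix_zero, ciSup_const]

lemma sum_supShtarkov_le_supShtarkov_succ [Nonempty X] (r : ℕ) (xs : List X) (ys : List Y)
    (x : X) : ∑ y, supShtarkov F r (xs ++ [x]) (ys ++ [y]) ≤ supShtarkov F (r + 1) xs ys :=
  sum_ciSup_le _ fun c => by
    let χ : List Y → X := fun | [] => x | y :: l => c y l
    simpa only [shtarkovPrefix_succ] using le_supShtarkov (r + 1) χ xs ys

lemma bddAbove_range_sum_supShtarkov [Nonempty X] (r : ℕ) (xs : List X) (ys : List Y) :
    BddAbove (Set.range fun x => ∑ y, supShtarkov F r (xs ++ [x]) (ys ++ [y])) :=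
  ⟨_, Set.forall_mem_range.2 (sum_supShtarkov_le_supShtarkov_succ r xs ys)⟩

lemma supShtarkov_succ [Nonempty X] (r : ℕ) (xs : List X) (ys : List Y) :
    supShtarkov F (r + 1) xs ys = ⨆ x, ∑ y, supShtarkov F r (xs ++ [x]) (ys ++ [y]) := by
  refine le_antisymm (ciSup_le fun χ => ?_)
    (ciSup_le (sum_supShtarkov_le_supShtarkov_succ r xs ys))
  rw [shtarkovPrefix_succ]
  exact (sum_le_sum fun y _ => le_supShtarkov r _ _ _).trans
    (le_ciSup (bddAbove_range_sum_supShtarkov r xs ys) (χ []))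

lemma valToGo_eq_add_elog_supShtarkov [Nonempty X] (F : Set (Expert X Y)) (r : ℕ)
    (xs : List X) (ys : List Y) {acc : EReal} (hacc : acc ≠ ⊥) :
    valToGo F r xs ys acc = acc + elog (supShtarkov F r xs ys) := by
  induction r generalizing xs ys acc with
  | zero =>
    have hbdd : BddAbove (Set.range fun f : F => likelihood (f : Expert X Y) xs ys) :=
      ⟨1, Set.forall_mem_range.2 fun f => likelihood_le_one _ _ _⟩
    rw [valToGo, sub_eq_add_neg, supShtarkov_zero, elog_iSup hbdd]
    congr 1
    calc -⨅ f : F, cumLoss (f : Expert X Y) xs ys = ⨆ f : F, -cumLoss (f : Expert X Y) xs ys :=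
          EReal.negOrderIso.map_iInf _
      _ = _ := by simp only [cumLoss_eq_negLog_likelihood, negLog_eq_neg_elog, neg_neg]
  | succ r ih =>
    have hround : ∀ x,
        ⨅ p : Simplex Y, ⨆ y, valToGo F r (xs ++ [x]) (ys ++ [y]) (acc + logloss p y) =
          acc + elog (∑ y, supShtarkov F r (xs ++ [x]) (ys ++ [y])) := by
      intro x
      have hstep : ∀ p : Simplex Y,
          ⨆ y, valToGo F r (xs ++ [x]) (ys ++ [y]) (acc + logloss p y) =
            acc + ⨆ y, (logloss p y + elog (supShtarkov F r (xs ++ [x]) (ys ++ [y]))) := by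
        intro p
        rw [EReal.add_iSup_of_ne_bot hacc]
        refine iSup_congr fun y => ?_
        rw [ih _ _ (EReal.add_ne_bot_iff.2 ⟨hacc, logloss_ne_bot p y⟩), add_assoc]
      have hleast := (monotone_id.const_add acc).map_isLeast
        (isLeast_iSup_logloss_add_elog fun y => supShtarkov_nonneg F r (xs ++ [x]) (ys ++ [y]))
      rw [← Set.range_comp] at hleast
      simp only [hstep]
      exact hleast.isGLB.iInf_eq
    rw [valToGo]
    simp only [hround]
    rw [← EReal.add_iSup_of_ne_bot hacc, ← elog_iSup (bddAbove_range_sum_supShtarkov r xs ys),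
      supShtarkov_succ]

end Shtarkov

theorem cnml_minimax_optimal_general
    {X Y : Type*} [Fintype Y] [Inhabited Y] [Nonempty X]
    (F : Set (Expert X Y)) (T t : ℕ)
    (xs : List X) (ys : List Y)
    (g : Y → ℝ)
    (hg : ∀ y, g y = ⨆ χ : List Y → X, shtarkovPrefix F (T - t) χ xs (ys ++ [y]))
    (hpos : 0 < ∑ y, g y)
    (pstar : Simplex Y) (hpstar : ∀ y, pstar.1 y = g y / ∑ y', g y') :
    (⨆ y : Y, (logloss pstar y + elog (g y))) = elog (∑ y, g y) ∧
    (∀ p : Simplex Y,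
      (⨆ y : Y, (logloss pstar y + elog (g y))) ≤ ⨆ y : Y, (logloss p y + elog (g y))) ∧
    (∀ p : Simplex Y,
      (⨆ y : Y, (logloss pstar y + valToGo F (T - t) xs (ys ++ [y]) 0)) ≤
        ⨆ y : Y, (logloss p y + valToGo F (T - t) xs (ys ++ [y]) 0)) := by
  have hvalue := iSup_logloss_add_elog_of_eq_div hpos hpstar
  have hoptimal : ∀ p : Simplex Y,
      ⨆ y, (logloss pstar y + elog (g y)) ≤ ⨆ y, (logloss p y + elog (g y)) := fun p =>
    hvalue ▸ elog_sum_le_iSup_logloss_add_elog (fun y => hg y ▸ supShtarkov_nonneg _ _ _ _) p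
  have hG : ∀ y, valToGo F (T - t) xs (ys ++ [y]) 0 = elog (g y) := fun y => by
    rw [valToGo_eq_add_elog_supShtarkov F (T - t) xs (ys ++ [y]) EReal.zero_ne_bot, zero_add,
      hg y, supShtarkov]
  refine ⟨hvalue, hoptimal, ?_⟩
  simpa only [hG] using hoptimal

/-- Fix `t ∈ [T]`, `x_{1:t} ∈ X^t` and `y_{1:t-1} ∈ Y^{t-1}`.  For `y ∈ Y`
let `g(y) = sup_χ S_T(F, χ | x_{1:t}, (y_{1:t-1}, y))`, supremum over context trees `χ` of
depth `T − t`, and suppose `Σ_y g(y) > 0`.  Then the contextual NML prediction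
`p̂*(y) = g(y) / Σ_{y'} g(y')` attains the minimum over `p ∈ Δ(Y)` of
`max_y [−log p(y) + log g(y)]`, this minimum value equals `log Σ_y g(y)`, and — since
`G(F, x_{1:t}, (y_{1:t-1}, y)) = log g(y)` — `p̂*` is the minimax optimal prediction at
round `t`, i.e. it minimizes `p ↦ max_y [ℓ(p, y) + G(F, x_{1:t}, (y_{1:t-1}, y))]`. -/
theorem cnml_minimax_optimal
    {X Y : Type*} [Fintype Y] [Inhabited Y] [Nonempty X]
    (F : Set (Expert X Y)) (hF : F.Nonempty) (T t : ℕ) (ht1 : 1 ≤ t) (ht : t ≤ T)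
    (xs : List X) (ys : List Y) (hxs : xs.length = t) (hys : ys.length = t - 1)
    (g : Y → ℝ)
    (hg : ∀ y, g y = ⨆ χ : List Y → X, shtarkovPrefix F (T - t) χ xs (ys ++ [y]))
    (hpos : 0 < ∑ y, g y)
    (pstar : Simplex Y) (hpstar : ∀ y, pstar.1 y = g y / ∑ y', g y') :
    (⨆ y : Y, (logloss pstar y + elog (g y))) = elog (∑ y, g y) ∧
    (∀ p : Simplex Y,
      (⨆ y : Y, (logloss pstar y + elog (g y))) ≤ ⨆ y : Y, (logloss p y + elog (g y))) ∧
    (∀ p : Simplex Y,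
      (⨆ y : Y, (logloss pstar y + valToGo F (T - t) xs (ys ++ [y]) 0)) ≤
        ⨆ y : Y, (logloss p y + valToGo F (T - t) xs (ys ++ [y]) 0)) :=
  cnml_minimax_optimal_general F T t xs ys g hg hpos pstar hpstar
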